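/- If a discrete sequence Λ in the unit disk 𝔻 is weakly separated, then X^0(Λ) = X^n(Λ) for all n ≥ 0. -/

import Mathlib

open Complex Set

noncomputable section

/-- The open unit disk `𝔻` in the complex plane. -/
def unitDisk : Set ℂ := {z : ℂ | ‖z‖ < 1}

/-- The Laplacian of `H : ℂ → ℝ`, as the sum of the second directional
derivatives in the directions `1` and `I`. -/
def laplacian (H : ℂ → ℝ) (z : ℂ) : ℝ :=
  fderiv ℝ (fun w => fderiv ℝ H w 1) z 1 +
    fderiv ℝ (fun w => fderiv ℝ H w Complex.I) z Complex.I

/-- `H` is harmonic on the unit disk: twice continuously differentiable with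
vanishing Laplacian. -/
def HarmonicOnDisk (H : ℂ → ℝ) : Prop :=
  ContDiffOn ℝ 2 H unitDisk ∧ ∀ z ∈ unitDisk, laplacian H z = 0

/-- `H ∈ Har₊(𝔻)`: a non-negative harmonic function on the unit disk. -/
def HarPos (H : ℂ → ℝ) : Prop :=
  HarmonicOnDisk H ∧ ∀ z ∈ unitDisk, 0 ≤ H z

/-- The pseudohyperbolic distance `ρ(z,w) = |z-w| / |1 - conj z * w|`. -/
def pDist (z w : ℂ) : ℝ := ‖(z - w) / (1 - (starRingEnd ℂ) z * w)‖

/-- The pseudohyperbolic disk `D(z,r) = {w ∈ 𝔻 : ρ(z,w) < r}`. -/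
def pDisk (z : ℂ) (r : ℝ) : Set ℂ := {w ∈ unitDisk | pDist z w < r}

/-- The Blaschke factor `b_a(z) = (z - a)/(1 - conj a * z)`. -/
def blaschke (a z : ℂ) : ℂ := (z - a) / (1 - (starRingEnd ℂ) a * z)

/-- A discrete sequence in `𝔻`: a set of (pairwise distinct) points of the unit
disk with no accumulation point inside the disk. -/
def DiscreteSeq (Λ : Set ℂ) : Prop :=
  Λ ⊆ unitDisk ∧ ∀ z ∈ unitDisk, ¬ AccPt z (Filter.principal Λ)

/-- The Nevanlinna class `N`: holomorphic functions on `𝔻` such that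
`log⁺ |f|` admits a majorant in `Har₊(𝔻)`. -/
def Nevanlinna (f : ℂ → ℂ) : Prop :=
  DifferentiableOn ℂ f unitDisk ∧
    ∃ H : ℂ → ℝ, HarPos H ∧ ∀ z ∈ unitDisk, Real.log (max ‖f z‖ 1) ≤ H z

/-- `Λ ∈ Int N`: for every bounded family of values on `Λ` there is a function
in the Nevanlinna class interpolating it. -/
def IntN (Λ : Set ℂ) : Prop :=
  ∀ v : ℂ → ℂ, (∃ C : ℝ, ∀ lam ∈ Λ, ‖v lam‖ ≤ C) →
    ∃ f : ℂ → ℂ, Nevanlinna f ∧ ∀ lam ∈ Λ, f lam = v lam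

/-- Pseudohyperbolic divided differences:
`divDiff j ω z = Δʲω(z 0, …, z j)`. -/
def divDiff : (j : ℕ) → (ℂ → ℂ) → (Fin (j + 1) → ℂ) → ℂ
  | 0, ω, z => ω (z 0)
  | j + 1, ω, z =>
      (divDiff j ω (fun i => z i.succ) - divDiff j ω (fun i => z i.castSucc)) /
        blaschke (z 0) (z (Fin.last (j + 1)))

/-- `ω ∈ X^m(Λ)`: the divided differences of order `m` (on tuples of `m+1`
pairwise distinct points of `Λ`) are uniformly controlled by a positive
harmonic function. -/
def MemX (m : ℕ) (Λ : Set ℂ) (ω : ℂ → ℂ) : Prop :=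
  ∃ H : ℂ → ℝ, HarPos H ∧ ∃ C : ℝ,
    ∀ z : Fin (m + 1) → ℂ, (∀ i, z i ∈ Λ) → Function.Injective z →
      ‖divDiff m ω z‖ * Real.exp (-(∑ i, H (z i))) ≤ C

/-- `Λ` is weakly separated: for some `H ∈ Har₊(𝔻)` the pseudohyperbolic disks
`D(λ, e^{-H(λ)})`, `λ ∈ Λ`, are pairwise disjoint. -/
def WeaklySep (Λ : Set ℂ) : Prop :=
  ∃ H : ℂ → ℝ, HarPos H ∧ ∀ lam ∈ Λ, ∀ mu ∈ Λ, lam ≠ mu →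
    Disjoint (pDisk lam (Real.exp (-H lam))) (pDisk mu (Real.exp (-H mu)))

/-!
Raising the order: in the recursion defining `Δ^{m+1}ω(λ₁, …, λ_{m+2})`, weak separation bounds
the denominator `|b_{λ₁}(λ_{m+2})|` from below by `e^{-H(λ₁)}`.

Lowering the order needs no separation. Read backwards, the recursion together with `|b| ≤ 1`
bounds `Δ^mω(v)` by a divided difference of order `m + 1` plus `Δ^mω` at the tuple obtained from
`v` by dropping its last point and putting a point of a fixed finite set `F ⊆ Λ` in front. After
`m + 1` such steps all points lie in `F`, where `Δ^mω` is bounded; the harmonic weight only picks up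
the constant `∑_{x ∈ F} H(x)`.
-/

lemma Fin.init_cons {α : Type*} {n : ℕ} (x : α) (p : Fin (n + 1) → α) :
    Fin.init (Fin.cons x p : Fin (n + 2) → α) = Fin.cons x (Fin.init p) := by
  funext i
  refine Fin.cases ?_ (fun j => ?_) i
  · rfl
  · exact Fin.cons_succ (α := fun _ => α) x (Fin.init p) j

lemma isOpen_unitDisk : IsOpen unitDisk :=
  isOpen_lt continuous_norm continuous_const

lemma laplacian_eq_laplacian_of_contDiffAt {H : ℂ → ℝ} {z : ℂ} (hH : ContDiffAt ℝ 2 H z) :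
    laplacian H z = Laplacian.laplacian H z := by
  have hd : DifferentiableAt ℝ (fderiv ℝ H) z :=
    (hH.fderiv_right (m := 1) (by norm_num)).differentiableAt one_ne_zero
  simp [laplacian, InnerProductSpace.laplacian_eq_iteratedFDeriv_complexPlane,
    iteratedFDeriv_two_apply, fderiv_clm_apply hd (differentiableAt_const _)]

lemma HarPos.add {H G : ℂ → ℝ} (hH : HarPos H) (hG : HarPos G) :
    HarPos (fun z => H z + G z) := by
  refine ⟨⟨hH.1.1.add hG.1.1, fun z hz => ?_⟩, fun z hz => add_nonneg (hH.2 z hz) (hG.2 z hz)⟩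
  have hHz := hH.1.1.contDiffAt (isOpen_unitDisk.mem_nhds hz)
  have hGz := hG.1.1.contDiffAt (isOpen_unitDisk.mem_nhds hz)
  calc laplacian (H + G) z = Laplacian.laplacian (H + G) z :=
        laplacian_eq_laplacian_of_contDiffAt (hHz.add hGz)
    _ = laplacian H z + laplacian G z := by
        rw [hHz.laplacian_add hGz, laplacian_eq_laplacian_of_contDiffAt hHz,
          laplacian_eq_laplacian_of_contDiffAt hGz]
    _ = 0 := by rw [hH.1.2 z hz, hG.1.2 z hz, add_zero]

lemma normSq_one_sub_conj_mul_sub_normSq_sub (a z : ℂ) :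
    normSq (1 - (starRingEnd ℂ) a * z) - normSq (z - a) = (1 - normSq a) * (1 - normSq z) := by
  simp only [normSq_apply, sub_re, sub_im, mul_re, mul_im, conj_re, conj_im, one_re, one_im]
  ring

lemma normSq_sub_lt_normSq_one_sub {a z : ℂ} (ha : ‖a‖ < 1) (hz : ‖z‖ < 1) :
    normSq (z - a) < normSq (1 - (starRingEnd ℂ) a * z) := by
  have ha' : normSq a < 1 := by rw [← Complex.sq_norm]; nlinarith [norm_nonneg a]
  have hz' : normSq z < 1 := by rw [← Complex.sq_norm]; nlinarith [norm_nonneg z]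
  have := normSq_one_sub_conj_mul_sub_normSq_sub a z
  nlinarith [mul_pos (sub_pos.2 ha') (sub_pos.2 hz')]

lemma norm_blaschke_lt_one {a z : ℂ} (ha : ‖a‖ < 1) (hz : ‖z‖ < 1) : ‖blaschke a z‖ < 1 := by
  have h := normSq_sub_lt_normSq_one_sub ha hz
  rw [← sq_lt_one_iff₀ (norm_nonneg _), Complex.sq_norm, blaschke, normSq_div,
    div_lt_one ((normSq_nonneg _).trans_lt h)]
  exact h

lemma norm_blaschke (a z : ℂ) : ‖blaschke a z‖ = pDist a z := by
  rw [blaschke, pDist, norm_div, norm_div, norm_sub_rev]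

lemma blaschke_ne_zero {a z : ℂ} (ha : ‖a‖ < 1) (hz : ‖z‖ < 1) (hne : a ≠ z) :
    blaschke a z ≠ 0 :=
  div_ne_zero (sub_ne_zero.2 hne.symm)
    (normSq_pos.1 ((normSq_nonneg _).trans_lt (normSq_sub_lt_normSq_one_sub ha hz)))

lemma sum_comp_le_sum_of_injective {ι α : Type*} [Fintype ι] {w : ι → α} (hw : Function.Injective w)
    {P : Finset α} (hP : ∀ i, w i ∈ P) {H : α → ℝ} (hH : ∀ x ∈ P, 0 ≤ H x) :
    ∑ i, H (w i) ≤ ∑ x ∈ P, H x := by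
  classical
  rw [← Finset.sum_image (fun x _ y _ h => hw h)]
  exact Finset.sum_le_sum_of_subset_of_nonneg (by simpa [Finset.image_subset_iff] using hP)
    (fun x hx _ => hH x hx)

lemma sum_union_le_of_nonneg {α : Type*} [DecidableEq α] {s t : Finset α} {H : α → ℝ}
    (hH : ∀ x ∈ s ∩ t, 0 ≤ H x) : ∑ x ∈ s ∪ t, H x ≤ ∑ x ∈ s, H x + ∑ x ∈ t, H x := by
  rw [← Finset.sum_union_inter]
  exact le_add_of_nonneg_right (Finset.sum_nonneg hH)

lemma exp_neg_le_pDist {Λ : Set ℂ} {H : ℂ → ℝ}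
    (hdisj : ∀ lam ∈ Λ, ∀ mu ∈ Λ, lam ≠ mu →
      Disjoint (pDisk lam (Real.exp (-H lam))) (pDisk mu (Real.exp (-H mu))))
    {lam mu : ℂ} (hlam : lam ∈ Λ) (hmu : mu ∈ Λ) (hmu' : mu ∈ unitDisk) (hne : lam ≠ mu) :
    Real.exp (-H lam) ≤ pDist lam mu := by
  by_contra! hlt
  have hcenter : mu ∈ pDisk mu (Real.exp (-H mu)) := ⟨hmu', by simp [pDist, Real.exp_pos]⟩
  exact Set.disjoint_left.1 (hdisj lam hlam mu hmu hne) ⟨hmu', hlt⟩ hcenter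

section DividedDifferences

variable {ω : ℂ → ℂ} {m : ℕ}

lemma divDiff_succ (w : Fin (m + 2) → ℂ) :
    divDiff (m + 1) ω w = (divDiff m ω (Fin.tail w) - divDiff m ω (Fin.init w)) /
      blaschke (w 0) (w (Fin.last (m + 1))) := rfl

lemma divDiff_cons (ξ : ℂ) (v : Fin (m + 1) → ℂ) :
    divDiff (m + 1) ω (Fin.cons ξ v) = (divDiff m ω v - divDiff m ω (Fin.cons ξ (Fin.init v))) /
      blaschke ξ (v (Fin.last m)) := by
  rw [divDiff_succ, Fin.tail_cons, Fin.init_cons, Fin.cons_zero, ← Fin.succ_last, Fin.cons_succ]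

lemma norm_divDiff_le_cons {ξ : ℂ} {v : Fin (m + 1) → ℂ} (hξ : ‖ξ‖ < 1)
    (hv : ‖v (Fin.last m)‖ < 1) (hne : ξ ≠ v (Fin.last m)) :
    ‖divDiff m ω v‖ ≤
      ‖divDiff (m + 1) ω (Fin.cons ξ v)‖ + ‖divDiff m ω (Fin.cons ξ (Fin.init v))‖ := by
  have hb := blaschke_ne_zero hξ hv hne
  have hsplit : divDiff m ω v = divDiff (m + 1) ω (Fin.cons ξ v) * blaschke ξ (v (Fin.last m)) +
      divDiff m ω (Fin.cons ξ (Fin.init v)) := by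
    rw [divDiff_cons, div_mul_cancel₀ _ hb, sub_add_cancel]
  calc ‖divDiff m ω v‖
      ≤ ‖divDiff (m + 1) ω (Fin.cons ξ v)‖ * ‖blaschke ξ (v (Fin.last m))‖ +
          ‖divDiff m ω (Fin.cons ξ (Fin.init v))‖ := by
        rw [hsplit, ← norm_mul]; exact norm_add_le _ _
    _ ≤ _ := by
        gcongr
        exact mul_le_of_le_one_right (norm_nonneg _) (norm_blaschke_lt_one hξ hv).le

end DividedDifferences

lemma exists_norm_divDiff_le_of_finite {s : Set ℂ} (hs : s.Finite) (ω : ℂ → ℂ) (m : ℕ) :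
    ∃ B : ℝ, 0 ≤ B ∧ ∀ v : Fin (m + 1) → ℂ, (∀ i, v i ∈ s) → ‖divDiff m ω v‖ ≤ B := by
  obtain ⟨B, hB⟩ := ((Set.Finite.pi fun _ : Fin (m + 1) => hs).image
    fun v => ‖divDiff m ω v‖).bddAbove
  exact ⟨max B 0, le_max_right B 0, fun v hv =>
    (hB ⟨v, fun i _ => hv i, rfl⟩).trans (le_max_left B 0)⟩

section MemX

variable {Λ : Set ℂ} {ω : ℂ → ℂ} {m : ℕ}

lemma memX_iff : MemX m Λ ω ↔ ∃ H : ℂ → ℝ, HarPos H ∧ ∃ C : ℝ, 0 ≤ C ∧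
    ∀ z : Fin (m + 1) → ℂ, (∀ i, z i ∈ Λ) → Function.Injective z →
      ‖divDiff m ω z‖ ≤ C * Real.exp (∑ i, H (z i)) := by
  have hexp (x C s : ℝ) : x * Real.exp (-s) ≤ C ↔ x ≤ C * Real.exp s := by
    rw [Real.exp_neg, ← div_eq_mul_inv, div_le_iff₀ (Real.exp_pos s)]
  constructor
  · rintro ⟨H, hH, C, hC⟩
    refine ⟨H, hH, max C 0, le_max_right C 0, fun z hzΛ hz => ?_⟩
    exact ((hexp _ _ _).1 (hC z hzΛ hz)).trans (by gcongr; exact le_max_left C 0)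
  · rintro ⟨H, hH, C, -, hC⟩
    exact ⟨H, hH, C, fun z hzΛ hz => (hexp _ _ _).2 (hC z hzΛ hz)⟩

lemma memX_of_finite (hΛ : Λ.Finite) : MemX m Λ ω := by
  obtain ⟨B, hB0, hB⟩ := exists_norm_divDiff_le_of_finite hΛ ω m
  refine memX_iff.2 ⟨fun _ => 0, ⟨⟨contDiffOn_const, fun z _ => ?_⟩, fun _ _ => le_rfl⟩, B, hB0,
    fun z hzΛ _ => by simpa using hB z hzΛ⟩
  simp [laplacian]

lemma memX_succ_of_memX (hΛ : Λ ⊆ unitDisk) (hsep : WeaklySep Λ) (h : MemX m Λ ω) :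
    MemX (m + 1) Λ ω := by
  obtain ⟨H, hH, C, hC0, hC⟩ := memX_iff.1 h
  obtain ⟨G, hG, hdisj⟩ := hsep
  refine memX_iff.2 ⟨fun z => H z + G z, hH.add hG, 2 * C, by positivity, fun w hwΛ hw => ?_⟩
  set S := ∑ i, H (w i)
  have hH0 (i : Fin (m + 2)) : 0 ≤ H (w i) := hH.2 _ (hΛ (hwΛ i))
  have htail : ‖divDiff m ω (Fin.tail w)‖ ≤ C * Real.exp S := by
    refine (hC _ (fun i => hwΛ _) (hw.comp (Fin.succ_injective _))).trans ?_
    gcongr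
    simp only [S, Fin.sum_univ_succ (fun i => H (w i))]
    exact le_add_of_nonneg_left (hH0 0)
  have hinit : ‖divDiff m ω (Fin.init w)‖ ≤ C * Real.exp S := by
    refine (hC _ (fun i => hwΛ _) (hw.comp (Fin.castSucc_injective _))).trans ?_
    gcongr
    simp only [S, Fin.sum_univ_castSucc (fun i => H (w i))]
    exact le_add_of_nonneg_right (hH0 _)
  have hb : Real.exp (-G (w 0)) ≤ ‖blaschke (w 0) (w (Fin.last (m + 1)))‖ := by
    rw [norm_blaschke]
    exact exp_neg_le_pDist hdisj (hwΛ 0) (hwΛ _) (hΛ (hwΛ _))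
      (hw.ne (Fin.last_pos.ne))
  have hG0 : G (w 0) ≤ ∑ i, G (w i) :=
    Finset.single_le_sum (fun i _ => hG.2 _ (hΛ (hwΛ i))) (Finset.mem_univ 0)
  calc ‖divDiff (m + 1) ω w‖
      = ‖divDiff m ω (Fin.tail w) - divDiff m ω (Fin.init w)‖ /
          ‖blaschke (w 0) (w (Fin.last (m + 1)))‖ := by rw [divDiff_succ, norm_div]
    _ ≤ (C * Real.exp S + C * Real.exp S) / Real.exp (-G (w 0)) := by
        gcongr
        exact norm_sub_le_of_le htail hinit
    _ = 2 * C * Real.exp (S + G (w 0)) := by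
        rw [Real.exp_add, Real.exp_neg, div_inv_eq_mul]; ring
    _ ≤ 2 * C * Real.exp (∑ i, (H (w i) + G (w i))) := by
        rw [Finset.sum_add_distrib]
        gcongr

/-- The last hypothesis says that the first `m + 1 - d` entries of `v` lie in `F`. Each step of the
induction drops the last entry and puts a point of `F` in front (`norm_divDiff_le_cons`), at the
cost `A`. -/
lemma norm_divDiff_le_of_mem_prefix {F P : Finset ℂ} (hFP : F ⊆ P) (hF : m + 1 < F.card)
    (hP : ∀ x ∈ P, ‖x‖ < 1) {A B : ℝ}
    (hB : ∀ v : Fin (m + 1) → ℂ, (∀ i, v i ∈ F) → ‖divDiff m ω v‖ ≤ B)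
    (hA : ∀ w : Fin (m + 2) → ℂ, (∀ i, w i ∈ P) → Function.Injective w →
      ‖divDiff (m + 1) ω w‖ ≤ A) :
    ∀ (d : ℕ) (v : Fin (m + 1) → ℂ), (∀ i, v i ∈ P) → Function.Injective v →
      (∀ i : Fin (m + 1), (i : ℕ) + d ≤ m → v i ∈ F) → ‖divDiff m ω v‖ ≤ B + d * A := by
  intro d
  induction d with
  | zero =>
    intro v _ _ hvF
    simpa using hB v fun i => hvF i (by omega)
  | succ d ih =>
    intro v hvP hv hvF
    obtain ⟨ξ, hξF, hξv⟩ : ∃ ξ ∈ F, ξ ∉ Finset.univ.image v :=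
      Finset.exists_mem_notMem_of_card_lt_card ((Finset.card_image_le.trans (by simp)).trans_lt hF)
    have hξv' (i : Fin (m + 1)) : ξ ≠ v i := by
      rintro rfl
      exact hξv (Finset.mem_image_of_mem v (Finset.mem_univ i))
    have hcons : ‖divDiff (m + 1) ω (Fin.cons ξ v)‖ ≤ A :=
      hA _ (Fin.forall_fin_succ.2 ⟨by simpa using hFP hξF, by simpa using hvP⟩)
        (Fin.cons_injective_iff.2 ⟨fun ⟨i, hi⟩ => hξv' i hi.symm, hv⟩)
    have hshift : ‖divDiff m ω (Fin.cons ξ (Fin.init v))‖ ≤ B + d * A := by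
      refine ih _
        (Fin.forall_fin_succ.2 ⟨by simpa using hFP hξF, fun i => by simpa [Fin.init] using hvP _⟩)
        (Fin.cons_injective_iff.2
          ⟨fun ⟨i, hi⟩ => hξv' _ hi.symm, hv.comp (Fin.castSucc_injective _)⟩)
        (Fin.forall_fin_succ.2 ⟨fun _ => by simpa using hξF, fun i hi => ?_⟩)
      simpa [Fin.init] using hvF i.castSucc (by simp at hi ⊢; omega)
    have := norm_divDiff_le_cons (ω := ω) (hP ξ (hFP hξF)) (hP _ (hvP _)) (hξv' (Fin.last m))
    push_cast
    linarith

lemma memX_of_memX_succ (hΛ : Λ ⊆ unitDisk) (h : MemX (m + 1) Λ ω) : MemX m Λ ω := by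
  classical
  rcases Λ.finite_or_infinite with hfin | hinf
  · exact memX_of_finite hfin
  obtain ⟨H, hH, C, hC0, hC⟩ := memX_iff.1 h
  obtain ⟨F, hFΛ, hFcard⟩ := hinf.exists_subset_card_eq (m + 2)
  obtain ⟨B, hB0, hB⟩ := exists_norm_divDiff_le_of_finite F.finite_toSet ω m
  set K := ∑ x ∈ F, H x
  refine memX_iff.2 ⟨H, hH, B + (m + 1) * (C * Real.exp K), by positivity, fun z hzΛ hz => ?_⟩
  set Sz := ∑ i, H (z i)
  set P := F ∪ Finset.univ.image z
  have hPΛ (x : ℂ) (hx : x ∈ P) : x ∈ Λ := by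
    rcases Finset.mem_union.1 hx with hx | hx
    · exact hFΛ hx
    · obtain ⟨i, -, rfl⟩ := Finset.mem_image.1 hx
      exact hzΛ i
  have hHP (x : ℂ) (hx : x ∈ P) : 0 ≤ H x := hH.2 x (hΛ (hPΛ x hx))
  have hSz : 0 ≤ Sz := Finset.sum_nonneg fun i _ => hH.2 _ (hΛ (hzΛ i))
  have hPsum : ∑ x ∈ P, H x ≤ K + Sz := by
    refine (sum_union_le_of_nonneg fun x hx =>
      hHP x (Finset.mem_union_left _ (Finset.mem_inter.1 hx).1)).trans ?_
    rw [Finset.sum_image fun x _ y _ h => hz h]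
  have hA (w : Fin (m + 2) → ℂ) (hwP : ∀ i, w i ∈ P) (hw : Function.Injective w) :
      ‖divDiff (m + 1) ω w‖ ≤ C * Real.exp (K + Sz) :=
    (hC w (fun i => hPΛ _ (hwP i)) hw).trans
      (by gcongr; exact (sum_comp_le_sum_of_injective hw hwP hHP).trans hPsum)
  have hz' := norm_divDiff_le_of_mem_prefix Finset.subset_union_left (by omega)
    (fun x hx => hΛ (hPΛ x hx)) (fun v hv => hB v fun i => hv i) hA (m + 1) z
    (fun i => Finset.mem_union_right _ (Finset.mem_image_of_mem z (Finset.mem_univ i))) hz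
    (fun i hi => by omega)
  calc ‖divDiff m ω z‖ ≤ B + (m + 1) * (C * Real.exp (K + Sz)) := by exact_mod_cast hz'
    _ ≤ B * Real.exp Sz + (m + 1) * (C * Real.exp (K + Sz)) := by
        gcongr
        exact le_mul_of_one_le_right hB0 (Real.one_le_exp hSz)
    _ = (B + (m + 1) * (C * Real.exp K)) * Real.exp Sz := by rw [Real.exp_add]; ring

end MemX

/-- If `Λ` is weakly separated then `X^0(Λ) = X^n(Λ)` for all `n ≥ 0`. -/
theorem X_zero_eq_X_n_of_weaklySep
    (Λ : Set ℂ) (hΛ : DiscreteSeq Λ) (hsep : WeaklySep Λ) (n : ℕ) (ω : ℂ → ℂ) :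
    MemX 0 Λ ω ↔ MemX n Λ ω := by
  induction n with
  | zero => rfl
  | succ n ih =>
    rw [ih]
    exact ⟨memX_succ_of_memX hΛ.1 hsep, memX_of_memX_succ hΛ.1⟩
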